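/- arXiv:2309.06804 — 3 statements merged into one kernel-verified Lean document; each statement's English description precedes it below -/
import Mathlib

section
/- Every (3,6)-tight finite simple graph with at least three vertices is connected and has no cut vertex. -/
open SimpleGraph

/-- `(3,6)`-sparsity for a simple graph: every subgraph with at least two edges
has freedom number `3|V'| - |E'|` at least `6`. -/
def Sparse36 {V : Type} (G : SimpleGraph V) : Prop :=
  ∀ H : G.Subgraph, 2 ≤ H.edgeSet.ncard →
    (6 : ℤ) ≤ 3 * (H.verts.ncard : ℤ) - (H.edgeSet.ncard : ℤ)

/-- `(3,6)`-tightness: `(3,6)`-sparse and the whole graph has freedom number `6`. -/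
def Tight36 {V : Type} (G : SimpleGraph V) : Prop :=
  Sparse36 G ∧ 3 * (Nat.card V : ℤ) - (G.edgeSet.ncard : ℤ) = 6

lemma key36 {V : Type} [Fintype V] (G : SimpleGraph V) (hG : Tight36 G)
    (hV : 3 ≤ Nat.card V) (A B : Set V)
    (hcover : A ∪ B = Set.univ)
    (hedge : ∀ ⦃x y⦄, G.Adj x y → (x ∈ A ∧ y ∈ A) ∨ (x ∈ B ∧ y ∈ B))
    (hk : (A ∩ B).ncard ≤ 1)
    (hA : (A \ B).Nonempty) (hB : (B \ A).Nonempty) : False := by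
  classical
  have hfinV : Finite V := Finite.of_fintype V
  set HA : G.Subgraph := (⊤ : G.Subgraph).induce A with hHA
  set HB : G.Subgraph := (⊤ : G.Subgraph).induce B with hHB
  have hvA : HA.verts = A := rfl
  have hvB : HB.verts = B := rfl
  -- edge sets
  have hsub : G.edgeSet ⊆ HA.edgeSet ∪ HB.edgeSet := by
    intro e he
    induction e with
    | h x y =>
      rw [SimpleGraph.mem_edgeSet] at he
      rcases hedge he with ⟨h1, h2⟩ | ⟨h1, h2⟩
      · left
        rw [SimpleGraph.Subgraph.mem_edgeSet]
        exact ⟨h1, h2, he⟩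
      · right
        rw [SimpleGraph.Subgraph.mem_edgeSet]
        exact ⟨h1, h2, he⟩
  have hE : G.edgeSet.ncard ≤ HA.edgeSet.ncard + HB.edgeSet.ncard :=
    le_trans (Set.ncard_le_ncard hsub (Set.toFinite _)) (Set.ncard_union_le _ _)
  have hcard : A.ncard + B.ncard = Nat.card V + (A ∩ B).ncard := by
    have := Set.ncard_union_add_ncard_inter A B
    rw [hcover, Set.ncard_univ] at this
    omega
  have haA : (A ∩ B).ncard + (A \ B).ncard = A.ncard :=
    Set.ncard_inter_add_ncard_diff_eq_ncard A B
  have haB : (B ∩ A).ncard + (B \ A).ncard = B.ncard :=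
    Set.ncard_inter_add_ncard_diff_eq_ncard B A
  rw [Set.inter_comm] at haB
  have hA1 : 0 < (A \ B).ncard := (Set.ncard_pos (Set.toFinite _)).mpr hA
  have hB1 : 0 < (B \ A).ncard := (Set.ncard_pos (Set.toFinite _)).mpr hB
  have hEG : 3 * (Nat.card V : ℤ) - (G.edgeSet.ncard : ℤ) = 6 := hG.2
  -- bounds on HA, HB edge counts
  have boundA : (HA.edgeSet.ncard : ℤ) ≤ max (3 * (A.ncard : ℤ) - 6) 1 := by
    rcases le_or_gt HA.edgeSet.ncard 1 with h | h
    · exact le_max_of_le_right (by exact_mod_cast h)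
    · have := hG.1 HA h
      rw [hvA] at this
      exact le_max_of_le_left (by linarith)
  have boundB : (HB.edgeSet.ncard : ℤ) ≤ max (3 * (B.ncard : ℤ) - 6) 1 := by
    rcases le_or_gt HB.edgeSet.ncard 1 with h | h
    · exact le_max_of_le_right (by exact_mod_cast h)
    · have := hG.1 HB h
      rw [hvB] at this
      exact le_max_of_le_left (by linarith)
  rcases max_cases (3 * (A.ncard : ℤ) - 6) 1 with ⟨hmA, _⟩ | ⟨hmA, _⟩ <;>
  rcases max_cases (3 * (B.ncard : ℤ) - 6) 1 with ⟨hmB, _⟩ | ⟨hmB, _⟩ <;>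
  rw [hmA] at boundA <;> rw [hmB] at boundB <;>
  · have hEz : (G.edgeSet.ncard : ℤ) ≤ (HA.edgeSet.ncard : ℤ) + (HB.edgeSet.ncard : ℤ) := by
      exact_mod_cast hE
    have hcz : (A.ncard : ℤ) + (B.ncard : ℤ) = (Nat.card V : ℤ) + ((A ∩ B).ncard : ℤ) := by
      exact_mod_cast hcard
    have haAz : ((A ∩ B).ncard : ℤ) + ((A \ B).ncard : ℤ) = (A.ncard : ℤ) := by exact_mod_cast haA
    have haBz : ((A ∩ B).ncard : ℤ) + ((B \ A).ncard : ℤ) = (B.ncard : ℤ) := by exact_mod_cast haB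
    have hkz : ((A ∩ B).ncard : ℤ) ≤ 1 := by exact_mod_cast hk
    have hA1z : (1:ℤ) ≤ ((A \ B).ncard : ℤ) := by exact_mod_cast hA1
    have hB1z : (1:ℤ) ≤ ((B \ A).ncard : ℤ) := by exact_mod_cast hB1
    have hVz : (3:ℤ) ≤ (Nat.card V : ℤ) := by exact_mod_cast hV
    linarith



/-- every `(3,6)`-tight finite simple graph with at least three
vertices is connected and has no cut vertex (the removal of any single vertex
leaves a connected graph). -/
theorem tight36_connected_no_cutVertex {V : Type} [Fintype V]
    (G : SimpleGraph V) (hG : Tight36 G) (hV : 3 ≤ Nat.card V) :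
    G.Connected ∧ ∀ v : V, ((⊤ : G.Subgraph).deleteVerts {v}).coe.Connected := by
  classical
  have hne : Nonempty V := by
    have : 0 < Nat.card V := by omega
    exact (Nat.card_pos_iff.mp this).1
  constructor
  · rw [connected_iff]
    refine ⟨?_, hne⟩
    by_contra hpc
    rw [SimpleGraph.Preconnected] at hpc
    push_neg at hpc
    obtain ⟨u, w, huw⟩ := hpc
    refine key36 G hG hV {x | G.Reachable u x} {x | G.Reachable u x}ᶜ ?_ ?_ ?_ ?_ ?_
    · exact Set.union_compl_self _
    · intro x y hxy
      by_cases hx : G.Reachable u x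
      · exact Or.inl ⟨hx, hx.trans hxy.reachable⟩
      · exact Or.inr ⟨hx, fun hy => hx (hy.trans hxy.symm.reachable)⟩
    · rw [Set.inter_compl_self, Set.ncard_empty]; omega
    · rw [Set.diff_compl, Set.inter_self]
      exact ⟨u, Reachable.refl u⟩
    · exact ⟨w, huw, huw⟩
  · intro v
    set D := ((⊤ : G.Subgraph).deleteVerts {v}).coe with hD
    have hverts : ((⊤ : G.Subgraph).deleteVerts {v}).verts = Set.univ \ {v} := by
      simp
    have hneD : Nonempty ((⊤ : G.Subgraph).deleteVerts {v}).verts := by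
      have : 1 < Fintype.card V := by rw [← Nat.card_eq_fintype_card]; omega
      obtain ⟨x, hx⟩ := Fintype.exists_ne_of_one_lt_card this v
      exact ⟨⟨x, by exact ⟨trivial, hx⟩⟩⟩
    rw [connected_iff]
    refine ⟨?_, hneD⟩
    by_contra hpc
    rw [SimpleGraph.Preconnected] at hpc
    push_neg at hpc
    obtain ⟨u, w, huw⟩ := hpc
    have hvalne : ∀ x : ((⊤ : G.Subgraph).deleteVerts {v}).verts, (x : V) ≠ v :=
      fun x => x.2.2
    refine key36 G hG hV
      (insert v (Subtype.val '' {x | D.Reachable u x}))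
      (insert v (Subtype.val '' {x | ¬ D.Reachable u x})) ?_ ?_ ?_ ?_ ?_
    · ext x
      simp only [Set.mem_union, Set.mem_insert_iff, Set.mem_image, Set.mem_setOf_eq,
        Set.mem_univ, iff_true]
      by_cases hx : x = v
      · exact Or.inl (Or.inl hx)
      · have hxm : x ∈ ((⊤ : G.Subgraph).deleteVerts {v}).verts := by
          exact ⟨trivial, hx⟩
        by_cases hr : D.Reachable u ⟨x, hxm⟩
        · exact Or.inl (Or.inr ⟨⟨x, hxm⟩, hr, rfl⟩)
        · exact Or.inr (Or.inr ⟨⟨x, hxm⟩, hr, rfl⟩)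
    · intro x y hxy
      by_cases hx : x = v
      · rw [hx]
        have hy : y ≠ v := hx ▸ hxy.ne'
        have hym : y ∈ ((⊤ : G.Subgraph).deleteVerts {v}).verts := by
          exact ⟨trivial, hy⟩
        by_cases hr : D.Reachable u ⟨y, hym⟩
        · exact Or.inl ⟨Set.mem_insert _ _, Set.mem_insert_iff.mpr (Or.inr ⟨⟨y, hym⟩, hr, rfl⟩)⟩
        · exact Or.inr ⟨Set.mem_insert _ _, Set.mem_insert_iff.mpr (Or.inr ⟨⟨y, hym⟩, hr, rfl⟩)⟩
      · by_cases hy : y = v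
        · rw [hy]
          have hxm : x ∈ ((⊤ : G.Subgraph).deleteVerts {v}).verts := by
            exact ⟨trivial, hx⟩
          by_cases hr : D.Reachable u ⟨x, hxm⟩
          · exact Or.inl ⟨Set.mem_insert_iff.mpr (Or.inr ⟨⟨x, hxm⟩, hr, rfl⟩), Set.mem_insert _ _⟩
          · exact Or.inr ⟨Set.mem_insert_iff.mpr (Or.inr ⟨⟨x, hxm⟩, hr, rfl⟩), Set.mem_insert _ _⟩
        · have hxm : x ∈ ((⊤ : G.Subgraph).deleteVerts {v}).verts := by
            exact ⟨trivial, hx⟩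
          have hym : y ∈ ((⊤ : G.Subgraph).deleteVerts {v}).verts := by
            exact ⟨trivial, hy⟩
          have hadj : D.Adj ⟨x, hxm⟩ ⟨y, hym⟩ := by
            rw [hD, SimpleGraph.Subgraph.coe_adj, SimpleGraph.Subgraph.deleteVerts_adj]
            simp [hx, hy, hxy]
          by_cases hr : D.Reachable u ⟨x, hxm⟩
          · exact Or.inl ⟨Set.mem_insert_iff.mpr (Or.inr ⟨⟨x, hxm⟩, hr, rfl⟩),
              Set.mem_insert_iff.mpr (Or.inr ⟨⟨y, hym⟩, hr.trans hadj.reachable, rfl⟩)⟩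
          · exact Or.inr ⟨Set.mem_insert_iff.mpr (Or.inr ⟨⟨x, hxm⟩, hr, rfl⟩),
              Set.mem_insert_iff.mpr (Or.inr ⟨⟨y, hym⟩,
                fun h => hr (h.trans hadj.symm.reachable), rfl⟩)⟩
    · have hsub : insert v (Subtype.val '' {x | D.Reachable u x}) ∩
          insert v (Subtype.val '' {x | ¬ D.Reachable u x}) ⊆ {v} := by
        rintro x ⟨hx1, hx2⟩
        rcases Set.mem_insert_iff.mp hx1 with h | ⟨a, ha, rfl⟩
        · exact h
        rcases Set.mem_insert_iff.mp hx2 with h | ⟨b, hb, hba⟩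
        · exact h
        · exact absurd (Subtype.val_injective hba ▸ hb) (not_not.mpr ha)
      calc _ ≤ ({v} : Set V).ncard := Set.ncard_le_ncard hsub (Set.toFinite _)
        _ = 1 := Set.ncard_singleton v
    · refine ⟨(u : V), Set.mem_insert_iff.mpr (Or.inr ⟨u, Reachable.refl u, rfl⟩), ?_⟩
      intro hmem
      rcases Set.mem_insert_iff.mp hmem with h | ⟨b, hb, hba⟩
      · exact hvalne u h
      · exact hb (by cases Subtype.val_injective hba; exact Reachable.refl _)
    · refine ⟨(w : V), Set.mem_insert_iff.mpr (Or.inr ⟨w, huw, rfl⟩), ?_⟩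
      intro hmem
      rcases Set.mem_insert_iff.mp hmem with h | ⟨b, hb, hba⟩
      · exact hvalne w h
      · exact huw (by cases Subtype.val_injective hba; exact hb)
end

section
/- The simplicial discus B† on a boundary cycle of length k ≥ 3 is (3,6)-tight: 3|V(B†)| - |E(B†)| = 6 and every subgraph with at least two edges J' satisfies 3|V(J')| - |E(J')| ≥ 6. -/
open SimpleGraph

/-- The simplicial discus on a boundary cycle of length `k`: the vertices are
the `k` cycle vertices (`Sum.inl i`) together with two poles (`Sum.inr p`);
consecutive cycle vertices are adjacent, each pole is adjacent to every cycle
vertex, and the two poles are not adjacent. -/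
def discus (k : ℕ) [NeZero k] : SimpleGraph (Fin k ⊕ Fin 2) where
  Adj x y :=
    match x, y with
    | Sum.inl i, Sum.inl j => i ≠ j ∧ (j = i + 1 ∨ i = j + 1)
    | Sum.inl _, Sum.inr _ => True
    | Sum.inr _, Sum.inl _ => True
    | Sum.inr _, Sum.inr _ => False
  symm := by
    refine ⟨?_⟩
    rintro (i | p) (j | q) h
    · exact ⟨Ne.symm h.1, Or.symm h.2⟩
    · trivial
    · trivial
    · exact h.elim
  loopless := by
    refine ⟨?_⟩
    rintro (i | p) h
    · exact h.1 rfl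
    · exact h

/-!
Split the vertices of a subgraph into `a` cycle vertices and `p ≤ 2` poles. It has at most
`a * p` spokes and at most `a` cycle edges, each being determined by its first endpoint; when
`1 ≤ a ≤ 2` it has fewer than `a`, as otherwise the chosen cycle vertices would be closed under
`i ↦ i + 1` and so contain the three distinct vertices `i, i + 1, i + 2` (here `k ≥ 3` is used).
A case split on `p` then gives `3 (a + p) - |E| ≥ 6` as soon as `|E| ≥ 2`, while the whole
discus has `k + 2` vertices and `k + 2k` edges.
-/

theorem Set.ncard_eq_ncard_preimage_inl_add_ncard_preimage_inr {α β : Type*}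
    (s : Set (α ⊕ β)) (hs : s.Finite := by toFinite_tac) :
    s.ncard = (Sum.inl ⁻¹' s).ncard + (Sum.inr ⁻¹' s).ncard := by
  conv_lhs => rw [← Set.image_preimage_inl_union_image_preimage_inr s]
  rw [Set.ncard_union_eq Set.disjoint_image_inl_image_inr
      ((hs.preimage Sum.inl_injective.injOn).image _)
      ((hs.preimage Sum.inr_injective.injOn).image _),
    Set.ncard_image_of_injective _ Sum.inl_injective,
    Set.ncard_image_of_injective _ Sum.inr_injective]

namespace Fin

variable {k : ℕ} [NeZero k]

theorem add_one_ne_self_of_two_le (hk : 2 ≤ k) (i : Fin k) : i + 1 ≠ i := by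
  rw [Ne, add_eq_left, Fin.ext_iff, Fin.val_one', Fin.val_zero, Nat.mod_eq_of_lt hk]
  exact one_ne_zero

theorem add_one_add_one_ne_self_of_three_le (hk : 3 ≤ k) (i : Fin k) : i + 1 + 1 ≠ i := by
  rw [Ne, add_assoc, add_eq_left, Fin.ext_iff, Fin.val_add, Fin.val_one', Fin.val_zero,
    Nat.mod_eq_of_lt (by omega : 1 < k), Nat.mod_eq_of_lt hk]
  exact two_ne_zero

theorem ncard_setOf_mem_and_add_one_mem_lt (hk : 3 ≤ k) {A : Set (Fin k)} (hA0 : 0 < A.ncard)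
    (hA : A.ncard ≤ 2) : {i | i ∈ A ∧ i + 1 ∈ A}.ncard < A.ncard := by
  refine Set.ncard_lt_ncard ⟨fun _ ↦ And.left, fun hsub ↦ ?_⟩
  obtain ⟨i, hi⟩ := Set.nonempty_of_ncard_ne_zero hA0.ne'
  have hi1 : i + 1 ∈ A := (hsub hi).2
  have hi2 : i + 1 + 1 ∈ A := (hsub hi1).2
  have h3 : ({i, i + 1, i + 1 + 1} : Set (Fin k)).ncard = 3 :=
    Set.ncard_eq_three.mpr ⟨_, _, _, (add_one_ne_self_of_two_le (by omega) i).symm,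
      (add_one_add_one_ne_self_of_three_le hk i).symm,
      (add_one_ne_self_of_two_le (by omega) (i + 1)).symm, rfl⟩
  have := Set.ncard_le_ncard
    (Set.insert_subset hi (Set.insert_subset hi1 (Set.singleton_subset_iff.2 hi2)))
  omega

end Fin

namespace Discus

variable {k : ℕ} [NeZero k]

def cycleEdge (i : Fin k) : Sym2 (Fin k ⊕ Fin 2) := s(.inl i, .inl (i + 1))

def spoke (v : Fin k × Fin 2) : Sym2 (Fin k ⊕ Fin 2) := s(.inl v.1, .inr v.2)

theorem edgeSet_subset_range : (discus k).edgeSet ⊆ Set.range cycleEdge ∪ Set.range spoke := by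
  intro e he
  induction e using Sym2.ind with
  | _ x y =>
  rcases x with i | p <;> rcases y with j | q
  · obtain ⟨-, rfl | rfl⟩ := he
    · exact .inl ⟨i, rfl⟩
    · exact .inl ⟨j, Sym2.eq_swap⟩
  · exact .inr ⟨(i, q), rfl⟩
  · exact .inr ⟨(j, p), Sym2.eq_swap⟩
  · exact he.elim

theorem edgeSet_eq_range (hk : 3 ≤ k) :
    (discus k).edgeSet = Set.range (Sum.elim cycleEdge spoke) := by
  refine (edgeSet_subset_range.trans (Set.Sum.elim_range _ _).ge).antisymm ?_
  rintro _ ⟨i | v, rfl⟩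
  · exact ⟨(Fin.add_one_ne_self_of_two_le (by omega) i).symm, .inl rfl⟩
  · trivial

theorem injective_sumElim_cycleEdge_spoke (hk : 3 ≤ k) :
    Function.Injective (Sum.elim (cycleEdge (k := k)) spoke) := by
  refine .sumElim ?_ ?_ ?_
  · intro i j h
    rcases Sym2.eq_iff.mp h with ⟨h, -⟩ | ⟨h, h'⟩
    · exact Sum.inl_injective h
    · obtain rfl := Sum.inl_injective h
      exact absurd (Sum.inl_injective h') (Fin.add_one_add_one_ne_self_of_three_le hk j)
  · rintro ⟨i, p⟩ ⟨j, q⟩ h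
    rcases Sym2.eq_iff.mp h with ⟨h, h'⟩ | ⟨h, -⟩
    · cases Sum.inl_injective h; cases Sum.inr_injective h'; rfl
    · exact (Sum.inl_ne_inr h).elim
  · rintro i v h
    rcases Sym2.eq_iff.mp h with ⟨-, h⟩ | ⟨h, -⟩ <;> exact Sum.inl_ne_inr h

theorem ncard_edgeSet (hk : 3 ≤ k) : (discus k).edgeSet.ncard = k + k * 2 := by
  rw [edgeSet_eq_range hk, Set.ncard_range_of_injective (injective_sumElim_cycleEdge_spoke hk),
    Nat.card_sum, Nat.card_prod, Nat.card_fin, Nat.card_fin]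

theorem edgeSet_subgraph_subset (H : (discus k).Subgraph) :
    H.edgeSet ⊆ cycleEdge '' {i | i ∈ Sum.inl ⁻¹' H.verts ∧ i + 1 ∈ Sum.inl ⁻¹' H.verts} ∪
      spoke '' ((Sum.inl ⁻¹' H.verts) ×ˢ (Sum.inr ⁻¹' H.verts)) := by
  intro e he
  have hverts {x} (hx : x ∈ e) : x ∈ H.verts := H.mem_verts_of_mem_edge he hx
  rcases edgeSet_subset_range (H.edgeSet_subset he) with ⟨i, rfl⟩ | ⟨v, rfl⟩
  · exact .inl ⟨i, ⟨hverts (Sym2.mem_mk_left _ _), hverts (Sym2.mem_mk_right _ _)⟩, rfl⟩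
  · exact .inr ⟨v, ⟨hverts (Sym2.mem_mk_left _ _), hverts (Sym2.mem_mk_right _ _)⟩, rfl⟩

theorem ncard_edgeSet_subgraph_le (H : (discus k).Subgraph) :
    H.edgeSet.ncard ≤ {i | i ∈ Sum.inl ⁻¹' H.verts ∧ i + 1 ∈ Sum.inl ⁻¹' H.verts}.ncard +
      (Sum.inl ⁻¹' H.verts).ncard * (Sum.inr ⁻¹' H.verts).ncard := by
  rw [← Set.ncard_prod]
  exact (Set.ncard_le_ncard (edgeSet_subgraph_subset H)).trans <|
    (Set.ncard_union_le _ _).trans (add_le_add Set.ncard_image_le Set.ncard_image_le)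

theorem six_add_le_three_mul_add {a p c e : ℕ} (hp : p ≤ 2) (hca : c ≤ a)
    (hc : 0 < a → a ≤ 2 → c < a) (he : e ≤ c + a * p) (he2 : 2 ≤ e) : 6 + e ≤ 3 * (a + p) := by
  by_cases ha : 0 < a ∧ a ≤ 2
  · have := hc ha.1 ha.2
    interval_cases p <;> omega
  · interval_cases p <;> omega

theorem sparse36 (hk : 3 ≤ k) : Sparse36 (discus k) := by
  intro H hE
  have hpoles : (Sum.inr ⁻¹' H.verts).ncard ≤ 2 := by
    simpa using Set.ncard_le_card (Sum.inr ⁻¹' H.verts : Set (Fin 2))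
  have key := six_add_le_three_mul_add hpoles (Set.ncard_le_ncard fun _ ↦ And.left)
    (Fin.ncard_setOf_mem_and_add_one_mem_lt hk) (ncard_edgeSet_subgraph_le H) hE
  rw [Set.ncard_eq_ncard_preimage_inl_add_ncard_preimage_inr H.verts]
  omega

end Discus

/-- the simplicial discus on a boundary cycle of length `k ≥ 3`
is `(3,6)`-tight. -/
theorem discus_tight (k : ℕ) [NeZero k] (hk : 3 ≤ k) :
    3 * (Nat.card (Fin k ⊕ Fin 2) : ℤ) - ((discus k).edgeSet.ncard : ℤ) = 6 ∧
      Sparse36 (discus k) := by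
  refine ⟨?_, Discus.sparse36 hk⟩
  rw [Discus.ncard_edgeSet hk, Nat.card_sum, Nat.card_fin, Nat.card_fin]
  push_cast
  ring
end

section
/- Let Ĝ = G ∪ B̂ where G and B̂ are subgraphs with G ∩ B̂ = ∂B, a cycle on vertex set S, and suppose B̂ is (3,6)-tight. If Ĝ is (3,6)-sparse then the multigraph G^{2σ}, obtained from G by adding two loops at each vertex of S, is (3,0)-sparse. -/
/-- A finite graph given by a finite vertex set and a finite set of edges
(unordered pairs of vertices). -/
structure FinGraph (α : Type) [DecidableEq α] where
  verts : Finset α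
  edges : Finset (Sym2 α)

namespace FinGraph

variable {α : Type} [DecidableEq α]

/-- `G` is a genuine simple graph: no loops, and all edge endpoints are vertices. -/
def WellFormed (G : FinGraph α) : Prop :=
  (∀ e ∈ G.edges, ¬ e.IsDiag) ∧ ∀ e ∈ G.edges, ∀ v ∈ e, v ∈ G.verts

/-- The freedom number `f(G) = 3|V(G)| - |E(G)|`. -/
def freedom (G : FinGraph α) : ℤ :=
  3 * (G.verts.card : ℤ) - (G.edges.card : ℤ)

/-- `H` is a subgraph of `G`. -/
def IsSubgraphOf (H G : FinGraph α) : Prop :=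
  H.verts ⊆ G.verts ∧ H.edges ⊆ G.edges

/-- Union of two subgraphs: union of vertex sets and of edge sets. -/
def union (K L : FinGraph α) : FinGraph α :=
  ⟨K.verts ∪ L.verts, K.edges ∪ L.edges⟩

/-- Intersection of two subgraphs: intersection of vertex sets and of edge sets. -/
def inter (K L : FinGraph α) : FinGraph α :=
  ⟨K.verts ∩ L.verts, K.edges ∩ L.edges⟩

/-- `(3,6)`-sparsity: every subgraph with at least two edges has freedom number at least 6. -/
def Sparse36 (G : FinGraph α) : Prop :=
  ∀ H : FinGraph α, H.WellFormed → H.IsSubgraphOf G → 2 ≤ H.edges.card → 6 ≤ H.freedom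

end FinGraph


/-- Key counting fact: a set of non-loop edges `E''` of a graph with max degree 2
(witnessed by `C`) whose endpoints all lie in `T` satisfies `|E''| ≤ |T|`. -/
lemma cycle_bound {α : Type} [DecidableEq α] (T : Finset α) (C E'' : Finset (Sym2 α))
    (hsub : E'' ⊆ C) (hnd : ∀ e ∈ E'', ¬ e.IsDiag) (hend : ∀ e ∈ E'', ∀ v ∈ e, v ∈ T)
    (hdeg : ∀ v ∈ T, (C.filter (fun e => v ∈ e)).card ≤ 2) :
    E''.card ≤ T.card := by
  have key : 2 * E''.card ≤ 2 * T.card := by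
    calc 2 * E''.card = ∑ e ∈ E'', 2 := by simp [mul_comm]
    _ ≤ ∑ e ∈ E'', (T.filter (fun v => v ∈ e)).card := by
        apply Finset.sum_le_sum
        intro e he
        induction e using Sym2.inductionOn with
        | hf a b =>
          have hab : a ≠ b := by
            have := hnd _ he; simpa [Sym2.isDiag_iff_proj_eq] using this
          have ha : a ∈ T.filter (fun v => v ∈ s(a, b)) := by
            simp [Finset.mem_filter, hend _ he a (by simp)]
          have hb : b ∈ T.filter (fun v => v ∈ s(a, b)) := by
            simp [Finset.mem_filter, hend _ he b (by simp)]
          have : ({a, b} : Finset α) ⊆ T.filter (fun v => v ∈ s(a, b)) := by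
            intro x hx
            rcases Finset.mem_insert.mp hx with h | h
            · subst h; exact ha
            · rw [Finset.mem_singleton.mp h]; exact hb
          calc 2 = ({a, b} : Finset α).card := (Finset.card_pair hab).symm
          _ ≤ _ := Finset.card_le_card this
    _ = ∑ v ∈ T, (E''.filter (fun e => v ∈ e)).card := by
        simp only [Finset.card_filter]
        exact Finset.sum_comm
    _ ≤ ∑ v ∈ T, 2 := by
        apply Finset.sum_le_sum
        intro v hv
        exact le_trans (Finset.card_le_card (Finset.filter_subset_filter _ hsub)) (hdeg v hv)
    _ = 2 * T.card := by simp [mul_comm]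
  omega

/-- if `Ĝ = G ∪ B̂` with `G ∩ B̂ = ∂B` a cycle on vertex set `S`,
`B̂` is `(3,6)`-tight and `Ĝ` is `(3,6)`-sparse, then the multigraph `G^{2σ}`,
obtained from `G` by adding two loops at each vertex of `S`, is `(3,0)`-sparse.
A sub-multigraph of `G^{2σ}` is a subgraph `(V', E')` of `G` together with a
subset `L` of the loops (two loops at each vertex of `S`) supported on `V'`;
`(3,0)`-sparsity says `|E'| + |L| ≤ 3|V'|` for all such. -/
theorem looped_sparse_of_blockUnion_sparse {α : Type} [DecidableEq α]
    (G B Ghat : FinGraph α) (S : Finset α) (C : Finset (Sym2 α))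
    (hG : G.WellFormed) (hB : B.WellFormed)
    (hUv : Ghat.verts = G.verts ∪ B.verts) (hUe : Ghat.edges = G.edges ∪ B.edges)
    (hIv : G.verts ∩ B.verts = S) (hIe : G.edges ∩ B.edges = C)
    -- `∂B = (S, C)` is a cycle on `S`:
    (hCcard : C.card = S.card)
    (hCmem : ∀ e ∈ C, ∀ v ∈ e, v ∈ S)
    (hCdeg : ∀ v ∈ S, (C.filter (fun e => v ∈ e)).card = 2)
    (hBtight : B.Sparse36 ∧ B.freedom = 6)
    (hGhatSparse : Ghat.Sparse36) :
    ∀ V' ⊆ G.verts, ∀ E' ⊆ G.edges, (∀ e ∈ E', ∀ v ∈ e, v ∈ V') →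
      ∀ L : Finset (α × Fin 2), (∀ p ∈ L, p.1 ∈ S ∧ p.1 ∈ V') →
        E'.card + L.card ≤ 3 * V'.card := by
  
  intro V' hV' E' hE' hE'V L hL
  -- notation
  set T : Finset α := V' ∩ S with hT
  -- bound on loops:  L ⊆ T ×ˢ univ
  have hLbound : L.card ≤ 2 * T.card := by
    have hsub : L ⊆ T ×ˢ (Finset.univ : Finset (Fin 2)) := by
      intro p hp
      rcases hL p hp with ⟨h1, h2⟩
      simp [Finset.mem_product, hT, Finset.mem_inter, h1, h2]
    calc L.card ≤ (T ×ˢ (Finset.univ : Finset (Fin 2))).card := Finset.card_le_card hsub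
    _ = 2 * T.card := by simp [Finset.card_product, mul_comm]
  -- intersections identified
  have hVint : V' ∩ B.verts = T := by
    ext x
    simp only [Finset.mem_inter, hT, ← hIv]
    constructor
    · rintro ⟨h1, h2⟩; exact ⟨h1, hV' h1, h2⟩
    · rintro ⟨h1, h2, h3⟩; exact ⟨h1, h3⟩
  have hEint : E' ∩ B.edges = E' ∩ C := by
    ext e
    simp only [Finset.mem_inter, ← hIe]
    constructor
    · rintro ⟨h1, h2⟩; exact ⟨h1, hE' h1, h2⟩
    · rintro ⟨h1, h2, h3⟩; exact ⟨h1, h3⟩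
  -- key cycle bound : |E' ∩ C| ≤ |T|
  have hEC : (E' ∩ C).card ≤ T.card := by
    apply cycle_bound T C
    · exact Finset.inter_subset_right
    · intro e he
      exact hG.1 e (hE' (Finset.mem_inter.mp he).1)
    · intro e he v hv
      rcases Finset.mem_inter.mp he with ⟨h1, h2⟩
      exact Finset.mem_inter.mpr ⟨hE'V e h1 v hv, hCmem e h2 v hv⟩
    · intro v hv
      exact le_of_eq (hCdeg v (Finset.mem_inter.mp hv).2)
  by_cases hbig : 2 ≤ (E' ∪ B.edges).card
  · -- main case : apply sparsity of Ghat to (V' ∪ B.verts, E' ∪ B.edges)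
    set K : FinGraph α := ⟨V' ∪ B.verts, E' ∪ B.edges⟩ with hK
    have hKwf : K.WellFormed := by
      constructor
      · intro e he
        rcases Finset.mem_union.mp he with h | h
        · exact hG.1 e (hE' h)
        · exact hB.1 e h
      · intro e he v hv
        rcases Finset.mem_union.mp he with h | h
        · exact Finset.mem_union_left _ (hE'V e h v hv)
        · exact Finset.mem_union_right _ (hB.2 e h v hv)
    have hKsub : K.IsSubgraphOf Ghat := by
      constructor
      · rw [hUv]; exact Finset.union_subset_union hV' (le_refl _)
      · rw [hUe]; exact Finset.union_subset_union hE' (le_refl _)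
    have hsparse := hGhatSparse K hKwf hKsub hbig
    have hcardV : (V' ∪ B.verts).card + T.card = V'.card + B.verts.card := by
      rw [← hVint]; exact Finset.card_union_add_card_inter _ _
    have hcardE : (E' ∪ B.edges).card + (E' ∩ C).card = E'.card + B.edges.card := by
      rw [← hEint]; exact Finset.card_union_add_card_inter _ _
    have hfree : (6 : ℤ) ≤ 3 * ((V' ∪ B.verts).card : ℤ) - ((E' ∪ B.edges).card : ℤ) :=
      hsparse
    have htight : (3 : ℤ) * (B.verts.card : ℤ) - (B.edges.card : ℤ) = 6 := hBtight.2
    -- combine with omega over casts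
    have h1 : ((V' ∪ B.verts).card : ℤ) + T.card = V'.card + B.verts.card := by
      exact_mod_cast hcardV
    have h2 : ((E' ∪ B.edges).card : ℤ) + ((E' ∩ C).card : ℤ) = E'.card + B.edges.card := by
      exact_mod_cast hcardE
    have h3 : ((E' ∩ C).card : ℤ) ≤ T.card := by exact_mod_cast hEC
    have h4 : (L.card : ℤ) ≤ 2 * T.card := by exact_mod_cast hLbound
    have : (E'.card : ℤ) + L.card ≤ 3 * V'.card := by linarith
    exact_mod_cast this
  · -- degenerate case : at most one edge in E' ∪ B.edges
    have hE'small : E'.card ≤ 1 :=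
      calc E'.card ≤ (E' ∪ B.edges).card := Finset.card_le_card Finset.subset_union_left
      _ ≤ 1 := by omega
    have hBsmall : B.edges.card ≤ 1 :=
      calc B.edges.card ≤ (E' ∪ B.edges).card := Finset.card_le_card Finset.subset_union_right
      _ ≤ 1 := by omega
    -- from  B tight : |E_B| = 3|V_B| - 6, so |E_B| ≤ 1 forces |V_B| = 2, |E_B| = 0
    have htight : (3 : ℤ) * (B.verts.card : ℤ) - (B.edges.card : ℤ) = 6 := hBtight.2
    have hBe0 : B.edges.card = 0 := by omega
    have hC0 : C.card = 0 := by
      have : C ⊆ B.edges := by rw [← hIe]; exact Finset.inter_subset_right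
      have := Finset.card_le_card this; omega
    have hS0 : S.card = 0 := by omega
    have hL0 : L.card = 0 := by
      rw [Finset.card_eq_zero] at hS0 ⊢
      rw [Finset.eq_empty_iff_forall_notMem]
      intro p hp
      have := (hL p hp).1
      rw [hS0] at this
      exact absurd this (Finset.notMem_empty _)
    rw [hL0, add_zero]
    rcases Nat.eq_zero_or_pos E'.card with h | h
    · omega
    · -- E' nonempty : pick an edge, it has a vertex in V'
      obtain ⟨e, he⟩ := Finset.card_pos.mp h
      have hVpos : 0 < V'.card := by
        apply Finset.card_pos.mpr
        induction e using Sym2.inductionOn with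
        | hf a b => exact ⟨a, hE'V _ he a (by simp)⟩
      omega
end
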